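/- arXiv:1806.03871 — 2 statements merged into one kernel-verified Lean document; each statement's English description precedes it below -/
import Mathlib

section
/- For every pair of integers p ≥ 3 and q ≥ 3, the triangle group Γ = Δ(p,q,∞) ≅ C_p * C_q has uncountably many conjugacy classes of nonparabolic maximal subgroups; that is, the set of conjugacy classes of subgroups of Γ that contain no parabolic element and are maximal proper subgroups of Γ is uncountable. -/
/-!
Let `Γ` act on `ℤ` so that `Z` acts as the shift `u ↦ u - 1`. No nonzero power of the shift has
a fixed point, so the stabilizer `M` of `0` contains no parabolic element. A subgroup strictly
containing `M` consists of the `g` with `g • 0 ∈ dℤ`, where `dℤ` is the set of `n` with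
`Z ^ n` in it; so `M` is maximal as soon as, for every `d ≥ 2`, some element of `M` (here `X`)
does not preserve the partition of `ℤ` into residues mod `d`. Such an action is the same as
permutations `x`, `y` of `ℤ` with `x ∘ y = (· + 1)` and `x ^ p = y ^ q = 1`. For every
`f : ℕ → Bool` we build one: the nonnegative integers are cut into blocks of length
`2p + 2q - 5`, each carrying a pendant `p`-cycle of `x` and a pendant `q`-cycle of `y` whose
relative position is chosen by `f`, and consecutive blocks are joined through the negative
integers. Because `Z` acts simply transitively, the stabilizer of `0` determines the action and
hence `f`, giving `2 ^ ℵ₀` such subgroups; each conjugacy class is countable since `Γ` is.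
-/

def triangleRels (p q : ℕ) : Set (FreeGroup (Fin 2)) :=
  {FreeGroup.of 0 ^ p, FreeGroup.of 1 ^ q}

/-- The triangle group Δ(p,q,∞) = ⟨X, Y ∣ X^p = Y^q = 1⟩ ≅ C_p * C_q. -/
abbrev Tri (p q : ℕ) : Type := PresentedGroup (triangleRels p q)

def triX (p q : ℕ) : Tri p q := PresentedGroup.of 0
def triY (p q : ℕ) : Tri p q := PresentedGroup.of 1
def triZ (p q : ℕ) : Tri p q := (triX p q * triY p q)⁻¹

/-- An element is parabolic if it is conjugate to a nonzero power of Z. -/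
def IsParabolic {p q : ℕ} (g : Tri p q) : Prop :=
  ∃ (k : ℤ) (c : Tri p q), k ≠ 0 ∧ g = c * (triZ p q) ^ k * c⁻¹

/-- A subgroup is nonparabolic if it contains no parabolic element. -/
def Nonparabolic {p q : ℕ} (M : Subgroup (Tri p q)) : Prop :=
  ∀ g ∈ M, ¬ IsParabolic g

/-- A Neumann subgroup: a complement to P = ⟨Z⟩, i.e. M ∩ P = 1 and MP = Γ. -/
def IsNeumann {p q : ℕ} (M : Subgroup (Tri p q)) : Prop :=
  M ⊓ Subgroup.zpowers (triZ p q) = ⊥ ∧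
  ∀ g : Tri p q, ∃ m ∈ M, ∃ k : ℤ, g = m * (triZ p q) ^ k

/-- Conjugacy of subgroups (restricted to those satisfying a property `P`). -/
def conjRel {G : Type*} [Group G] (P : Subgroup G → Prop)
    (M N : {M : Subgroup G // P M}) : Prop :=
  ∃ g : G, (N : Subgroup G) = Subgroup.map (MulAut.conj g).toMonoidHom (M : Subgroup G)

open Function

lemma Subgroup.map_conj_map_conj {G : Type*} [Group G] (g h : G) (M : Subgroup G) :
    (M.map (MulAut.conj g).toMonoidHom).map (MulAut.conj h).toMonoidHom =
      M.map (MulAut.conj (h * g)).toMonoidHom := by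
  rw [Subgroup.map_map, map_mul]
  rfl

lemma uncountable_quot_conjRel {G ι : Type*} [Group G] [Countable G] [Uncountable ι]
    {P : Subgroup G → Prop} {T : ι → Subgroup G} (hT : Injective T) (hP : ∀ i, P (T i)) :
    Uncountable (Quot (conjRel P)) := by
  let conjugates : Quot (conjRel P) → Set (Subgroup G) :=
    Quot.lift (fun M => Set.range fun g : G => M.1.map (MulAut.conj g).toMonoidHom) <| by
      rintro M N ⟨g, hg⟩
      ext K
      simp only [Set.mem_range, hg, Subgroup.map_conj_map_conj]
      exact ⟨fun ⟨h, hh⟩ => ⟨h * g⁻¹, by rwa [inv_mul_cancel_right]⟩, fun ⟨h, hh⟩ => ⟨h * g, hh⟩⟩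
  have hcount : ∀ c, (conjugates c).Countable := Quot.ind fun _ => Set.countable_range _
  by_contra hQ
  have : Countable (Quot (conjRel P)) := not_uncountable_iff.mp hQ
  have hrange : (Set.range T).Countable :=
    (Set.countable_iUnion hcount).mono <| by
      rintro _ ⟨i, rfl⟩
      exact Set.mem_iUnion.mpr ⟨Quot.mk _ ⟨T i, hP i⟩, 1, by ext; simp⟩
  have := hrange.to_subtype
  exact not_countable (α := ι) (Equiv.ofInjective T hT).injective.countable

section ShiftAction

variable {G : Type*} [Group G] {φ : G →* Equiv.Perm ℤ} {z : G}

abbrev stabilizerZero (φ : G →* Equiv.Perm ℤ) : Subgroup G :=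
  (MulAction.stabilizer (Equiv.Perm ℤ) (0 : ℤ)).comap φ

lemma mem_stabilizerZero {g : G} : g ∈ stabilizerZero φ ↔ φ g 0 = 0 := Iff.rfl

lemma apply_zpow_of_eq_shift (hz : φ z = Equiv.addRight (-1)) (k u : ℤ) :
    φ (z ^ k) u = u - k := by
  simp [hz, sub_eq_add_neg]

lemma zpow_mul_mem_stabilizerZero (hz : φ z = Equiv.addRight (-1)) (g : G) :
    z ^ φ g 0 * g ∈ stabilizerZero φ := by
  rw [mem_stabilizerZero, map_mul, Equiv.Perm.mul_apply, apply_zpow_of_eq_shift hz, sub_self]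

lemma eq_zero_of_conj_zpow_mem_stabilizerZero (hz : φ z = Equiv.addRight (-1)) {c : G} {k : ℤ}
    (h : c * z ^ k * c⁻¹ ∈ stabilizerZero φ) : k = 0 := by
  rw [mem_stabilizerZero, map_mul, map_mul, Equiv.Perm.mul_apply, Equiv.Perm.mul_apply,
    apply_zpow_of_eq_shift hz, ← Equiv.Perm.eq_inv_iff_eq, map_inv] at h
  omega

lemma eq_of_stabilizerZero_eq {ψ : G →* Equiv.Perm ℤ} (hφ : φ z = Equiv.addRight (-1))
    (hψ : ψ z = Equiv.addRight (-1)) (h : stabilizerZero φ = stabilizerZero ψ) : φ = ψ := by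
  ext g u : 2
  have hmem : z ^ φ g u * g * z ^ (-u) ∈ stabilizerZero ψ := by
    rw [← h, mem_stabilizerZero, map_mul, map_mul, Equiv.Perm.mul_apply, Equiv.Perm.mul_apply,
      apply_zpow_of_eq_shift hφ, apply_zpow_of_eq_shift hφ]
    ring_nf
  rw [mem_stabilizerZero, map_mul, map_mul, Equiv.Perm.mul_apply, Equiv.Perm.mul_apply,
    apply_zpow_of_eq_shift hψ, apply_zpow_of_eq_shift hψ, zero_sub, neg_neg] at hmem
  omega

lemma zpow_apply_zero_mem_iff (hz : φ z = Equiv.addRight (-1)) {N : Subgroup G}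
    (hN : stabilizerZero φ ≤ N) (g : G) : z ^ φ g 0 ∈ N ↔ g ∈ N := by
  have hg := hN (zpow_mul_mem_stabilizerZero hz g)
  exact ⟨fun h => by simpa using N.mul_mem (N.inv_mem h) hg,
    fun h => by simpa using N.mul_mem hg (N.inv_mem h)⟩

lemma isCoatom_stabilizerZero (hz : φ z = Equiv.addRight (-1))
    (hprim : ∀ d : ℤ, 2 ≤ d → ∃ g ∈ stabilizerZero φ, ∃ u, d ∣ u ∧ ¬ d ∣ φ g u) :
    IsCoatom (stabilizerZero φ) := by
  refine ⟨fun htop => ?_, fun N hN => ?_⟩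
  · have : z ∈ stabilizerZero φ := htop ▸ Subgroup.mem_top z
    simp [hz] at this
  obtain ⟨a, ha⟩ :=
    Int.subgroup_cyclic (N.toAddSubgroup.comap (zmultiplesHom _ (Additive.ofMul z)))
  have zpow_mem (n : ℤ) : z ^ n ∈ N ↔ a ∣ n := by
    rw [← Int.mem_zmultiples_iff, AddSubgroup.zmultiples_eq_closure, ← ha]
    rfl
  have mem_N (g : G) : g ∈ N ↔ a ∣ φ g 0 := by
    rw [← zpow_apply_zero_mem_iff hz hN.le, zpow_mem]
  obtain ha0 | ha1 | ha2 : a = 0 ∨ a.natAbs = 1 ∨ 2 ≤ a.natAbs := by omega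
  · refine absurd (fun g hg => ?_) hN.not_ge
    simpa [ha0, mem_stabilizerZero] using (mem_N g).mp hg
  · exact eq_top_iff.mpr fun g _ => (mem_N g).mpr (Int.natAbs_dvd.mp (by simp [ha1]))
  obtain ⟨g, hg, u, hdu, hndu⟩ := hprim a.natAbs (by omega)
  have : g * z ^ (-u) ∈ N :=
    N.mul_mem (hN.le hg) ((zpow_mem _).mpr (Int.natAbs_dvd.mp hdu).neg_right)
  rw [mem_N, map_mul, Equiv.Perm.mul_apply, apply_zpow_of_eq_shift hz, zero_sub, neg_neg] at this
  exact absurd (Int.natAbs_dvd.mpr this) hndu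

end ShiftAction

def permOfIsPeriodicPt {α : Type*} (g : α → α) {n : ℕ} (hn : n ≠ 0)
    (h : ∀ a, IsPeriodicPt g n a) : Equiv.Perm α where
  toFun := g
  invFun := g^[n - 1]
  left_inv a := by
    have := h a
    rwa [IsPeriodicPt, IsFixedPt, ← Nat.sub_add_cancel (Nat.one_le_iff_ne_zero.mpr hn),
      iterate_succ_apply] at this
  right_inv a := by
    have := h a
    rwa [IsPeriodicPt, IsFixedPt, ← Nat.sub_add_cancel (Nat.one_le_iff_ne_zero.mpr hn),
      iterate_succ_apply'] at this

lemma permOfIsPeriodicPt_pow {α : Type*} (g : α → α) {n : ℕ} (hn : n ≠ 0)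
    (h : ∀ a, IsPeriodicPt g n a) : permOfIsPeriodicPt g hn h ^ n = 1 := by
  ext a
  rw [Equiv.Perm.coe_pow]
  exact h a

instance : Uncountable (ℕ → Bool) := by
  rw [← Cardinal.aleph0_lt_mk_iff]
  simpa using Cardinal.cantor Cardinal.aleph0

instance (p q : ℕ) : Countable (Tri p q) := Quotient.countable

section Runs

variable {g : ℤ → ℤ} {a : ℤ} {n : ℕ}

lemma iterate_eq_add_of_run (h : ∀ v, a ≤ v → v < a + n → g v = v + 1) : g^[n] a = a + n := by
  induction n with
  | zero => simp
  | succ n ih =>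
    rw [iterate_succ_apply', ih fun v h₁ h₂ => h v h₁ (by omega), h (a + n) (by omega) (by omega)]
    push_cast; ring

lemma iterate_succ_eq_of_run (h : ∀ v, a ≤ v → v < a + n → g v = v + 1) :
    g^[n + 1] a = g (a + n) := by
  rw [iterate_succ_apply', iterate_eq_add_of_run h]

lemma Function.IsPeriodicPt.of_run {k : ℕ} {b : ℤ} (h : ∀ v, a ≤ v → v < b → g v = v + 1)
    (ha : IsPeriodicPt g k a) {v : ℤ} (hav : a ≤ v) (hvb : v ≤ b) : IsPeriodicPt g k v := by
  have hrun := iterate_eq_add_of_run (n := (v - a).toNat) fun w h₁ h₂ => h w h₁ (by omega)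
  rw [Int.toNat_of_nonneg (by omega), add_sub_cancel] at hrun
  exact hrun ▸ ha.apply_iterate _

end Runs

namespace TriangleAction

variable {p q : ℕ} {f : ℕ → Bool}

def period (p q : ℕ) : ℤ := 2 * p + 2 * q - 5

def pendantPos (f : ℕ → Bool) (m : ℤ) : ℕ := if f m.toNat then 2 else 1

/- The action of `x` and `y` on the point `m * period p q + r` (`0 ≤ r < period p q`) of block
`m`, whose pendant cycles sit at offset `a ∈ {1, 2}`. In these offsets the nontrivial `x`-cycles
are `[1, a] ∪ [a + q, p + q - 1]` and `{-(m + 1)} ∪ [p + 2q - 3, period p q]`, the last point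
being `0` of block `m + 1`; the nontrivial `y`-cycles are `[a, a + q - 1]` and
`{0} ∪ [p + q - 1, p + 2q - 4] ∪ {-(m + 1)}`. -/
def xLocal (p q : ℕ) (a m r : ℤ) : ℤ :=
  if r = 0 then -m
  else if r < a then m * period p q + r + 1
  else if r = a then m * period p q + r + q
  else if r < q + a then m * period p q + r
  else if r < q + p - 1 then m * period p q + r + 1
  else if r = q + p - 1 then m * period p q + 1
  else if r < p + 2 * q - 3 then m * period p q + r
  else m * period p q + r + 1

def yLocal (p q : ℕ) (a m r : ℤ) : ℤ :=
  if r = 0 then m * period p q + (p + q - 1)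
  else if r < a then m * period p q + r
  else if r < q + a - 1 then m * period p q + r + 1
  else if r = q + a - 1 then m * period p q + a
  else if r < q + p - 1 then m * period p q + r
  else if r < p + 2 * q - 4 then m * period p q + r + 1
  else if r = p + 2 * q - 4 then -(m + 1)
  else m * period p q + r

def xMap (p q : ℕ) (f : ℕ → Bool) (u : ℤ) : ℤ :=
  if u < 0 then -u * period p q - (p - 2)
  else xLocal p q (pendantPos f (u / period p q)) (u / period p q) (u % period p q)

def yMap (p q : ℕ) (f : ℕ → Bool) (u : ℤ) : ℤ :=
  if u < 0 then (-u - 1) * period p q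
  else yLocal p q (pendantPos f (u / period p q)) (u / period p q) (u % period p q)

lemma pendantPos_bounds (f : ℕ → Bool) (m : ℤ) : 1 ≤ pendantPos f m ∧ pendantPos f m ≤ 2 := by
  unfold pendantPos; split <;> simp

lemma ediv_emod_period {m w : ℤ} (h₁ : m * period p q ≤ w)
    (h₂ : w < m * period p q + period p q) :
    w / period p q = m ∧ w % period p q = w - m * period p q :=
  (Int.ediv_emod_unique (by nlinarith)).mpr ⟨by ring, by omega, by omega⟩

lemma xMap_of_nonneg {m w : ℤ} (hm : 0 ≤ m) (h₁ : m * period p q ≤ w)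
    (h₂ : w < m * period p q + period p q) :
    xMap p q f w = xLocal p q (pendantPos f m) m (w - m * period p q) := by
  obtain ⟨hdiv, hmod⟩ := ediv_emod_period h₁ h₂
  rw [xMap, if_neg (by nlinarith), hdiv, hmod]

lemma yMap_of_nonneg {m w : ℤ} (hm : 0 ≤ m) (h₁ : m * period p q ≤ w)
    (h₂ : w < m * period p q + period p q) :
    yMap p q f w = yLocal p q (pendantPos f m) m (w - m * period p q) := by
  obtain ⟨hdiv, hmod⟩ := ediv_emod_period h₁ h₂
  rw [yMap, if_neg (by nlinarith), hdiv, hmod]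

lemma xMap_of_neg {u : ℤ} (hu : u < 0) : xMap p q f u = -u * period p q - (p - 2) := if_pos hu

lemma yMap_of_neg {u : ℤ} (hu : u < 0) : yMap p q f u = (-u - 1) * period p q := if_pos hu

lemma xMap_zero : xMap p q f 0 = 0 := by simp [xMap, xLocal]

variable (hp : 3 ≤ p) (hq : 3 ≤ q)
include hp hq

lemma exists_block {u : ℤ} (hu : 0 ≤ u) :
    ∃ m, 0 ≤ m ∧ m * period p q ≤ u ∧ u < m * period p q + period p q := by
  have hP : 0 < period p q := by unfold period; omega
  refine ⟨u / period p q, Int.ediv_nonneg hu hP.le, Int.ediv_mul_le u hP.ne', ?_⟩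
  linarith [Int.lt_ediv_add_one_mul_self u hP]

lemma xMap_yMap (u : ℤ) : xMap p q f (yMap p q f u) = u + 1 := by
  have hP : period p q = 2 * p + 2 * q - 5 := rfl
  rcases lt_or_ge u 0 with hu | hu
  · rw [yMap_of_neg hu, xMap_of_nonneg (m := -u - 1) (by omega) le_rfl (by nlinarith)]
    simp [xLocal, add_comm]
  obtain ⟨m, hm, h₁, h₂⟩ := exists_block hp hq hu
  have ha := pendantPos_bounds f m
  rw [yMap_of_nonneg hm h₁ h₂]
  unfold yLocal
  split_ifs <;>
    first
    | simp (disch := omega) only [xMap_of_nonneg hm, xLocal, if_pos, if_neg, add_sub_cancel] <;>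
        omega
    | rw [xMap_of_neg (by omega), neg_neg, add_one_mul]; omega

lemma isPeriodicPt_xMap_pendant {m v : ℤ} (hm : 0 ≤ m)
    (hv : m * period p q + 1 ≤ v ∧ v ≤ m * period p q + pendantPos f m ∨
      m * period p q + pendantPos f m + q ≤ v ∧ v ≤ m * period p q + q + p - 1) :
    IsPeriodicPt (xMap p q f) p v := by
  have hP : period p q = 2 * p + 2 * q - 5 := rfl
  have ha := pendantPos_bounds f m
  set a := pendantPos f m
  have run₁ : ∀ w, m * period p q + 1 ≤ w → w < m * period p q + a → xMap p q f w = w + 1 := by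
    intros; simp (disch := omega) only [xMap_of_nonneg hm, xLocal, if_pos, if_neg, add_sub_cancel]
  have run₂ : ∀ w, m * period p q + a + q ≤ w → w < m * period p q + q + p - 1 →
      xMap p q f w = w + 1 := by
    intros; simp (disch := omega) only [xMap_of_nonneg hm, xLocal, if_pos, if_neg, add_sub_cancel]
  have jump₁ : xMap p q f (m * period p q + a) = m * period p q + a + q := by
    simp (disch := omega) only [xMap_of_nonneg hm, xLocal, if_pos, if_neg, add_sub_cancel]
  have jump₂ : xMap p q f (m * period p q + q + p - 1) = m * period p q + 1 := by
    simp (disch := omega) only [xMap_of_nonneg hm, xLocal, if_pos, if_neg, add_sub_cancel]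
  have hstart :
      IsPeriodicPt (xMap p q f) ((p - 1 - a) + 1 + ((a - 1) + 1)) (m * period p q + 1) := by
    rw [IsPeriodicPt, IsFixedPt, iterate_add_apply,
      iterate_succ_eq_of_run fun w h₁ h₂ => run₁ w h₁ (by omega),
      show m * period p q + 1 + (a - 1 : ℕ) = m * period p q + a by omega, jump₁,
      iterate_succ_eq_of_run fun w h₁ h₂ => run₂ w (by omega) (by omega), ← jump₂]
    congr 1; omega
  rw [show (p - 1 - a) + 1 + ((a - 1) + 1) = p by omega] at hstart
  rcases hv with hv | hv
  · exact hstart.of_run run₁ hv.1 hv.2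
  · have hend₁ := hstart.of_run run₁ (v := m * period p q + a) (by omega) le_rfl
    exact (jump₁ ▸ hend₁.apply).of_run run₂ (by omega) hv.2

lemma isPeriodicPt_xMap_chain {m v : ℤ} (hm : 0 ≤ m)
    (hv : v = -(m + 1) ∨
      m * period p q + p + 2 * q - 3 ≤ v ∧ v ≤ m * period p q + period p q) :
    IsPeriodicPt (xMap p q f) p v := by
  have hP : period p q = 2 * p + 2 * q - 5 := rfl
  have ha := pendantPos_bounds f m
  have run : ∀ w, m * period p q + p + 2 * q - 3 ≤ w → w < m * period p q + period p q →
      xMap p q f w = w + 1 := by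
    intro w h₁ h₂
    simp (disch := omega) only [xMap_of_nonneg hm, xLocal, if_neg, add_sub_cancel]
  have enter : xMap p q f (-(m + 1)) = m * period p q + p + 2 * q - 3 := by
    rw [xMap_of_neg (by omega)]; linear_combination hP
  have exit : xMap p q f (m * period p q + period p q) = -(m + 1) := by
    have e : (m + 1) * period p q = m * period p q + period p q := by ring
    simp (disch := omega) only [xMap_of_nonneg (m := m + 1) (by omega), xLocal, if_pos]
  have hstart : IsPeriodicPt (xMap p q f) ((p - 2) + 1 + 1) (-(m + 1)) := by
    rw [IsPeriodicPt, IsFixedPt, iterate_add_apply, iterate_one, enter,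
      iterate_succ_eq_of_run fun w h₁ h₂ => run w h₁ (by omega), ← exit]
    congr 1; omega
  rw [show (p - 2) + 1 + 1 = p by omega] at hstart
  rcases hv with rfl | hv
  · exact hstart
  · exact (enter ▸ hstart.apply).of_run run hv.1 hv.2

lemma isPeriodicPt_yMap_pendant {m v : ℤ} (hm : 0 ≤ m)
    (hv : m * period p q + pendantPos f m ≤ v ∧ v ≤ m * period p q + pendantPos f m + q - 1) :
    IsPeriodicPt (yMap p q f) q v := by
  have hP : period p q = 2 * p + 2 * q - 5 := rfl
  have ha := pendantPos_bounds f m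
  set a := pendantPos f m
  have run : ∀ w, m * period p q + a ≤ w → w < m * period p q + a + q - 1 →
      yMap p q f w = w + 1 := by
    intro w h₁ h₂
    simp (disch := omega) only [yMap_of_nonneg hm, yLocal, if_pos, if_neg, add_sub_cancel]
  have back : yMap p q f (m * period p q + a + q - 1) = m * period p q + a := by
    simp (disch := omega) only [yMap_of_nonneg hm, yLocal, if_pos, if_neg]
    rfl
  have hstart : IsPeriodicPt (yMap p q f) ((q - 1) + 1) (m * period p q + a) := by
    rw [IsPeriodicPt, IsFixedPt, iterate_succ_eq_of_run fun w h₁ h₂ => run w h₁ (by omega),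
      ← back]
    congr 1; omega
  rw [show (q - 1) + 1 = q by omega] at hstart
  exact hstart.of_run run hv.1 (by omega)

lemma isPeriodicPt_yMap_chain {m v : ℤ} (hm : 0 ≤ m)
    (hv : v = m * period p q ∨ v = -(m + 1) ∨
      m * period p q + p + q - 1 ≤ v ∧ v ≤ m * period p q + p + 2 * q - 4) :
    IsPeriodicPt (yMap p q f) q v := by
  have hP : period p q = 2 * p + 2 * q - 5 := rfl
  have ha := pendantPos_bounds f m
  have enter : yMap p q f (m * period p q) = m * period p q + p + q - 1 := by
    simp (disch := omega) only [yMap_of_nonneg hm, yLocal, if_pos]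
    ring
  have run : ∀ w, m * period p q + p + q - 1 ≤ w → w < m * period p q + p + 2 * q - 4 →
      yMap p q f w = w + 1 := by
    intro w h₁ h₂
    simp (disch := omega) only [yMap_of_nonneg hm, yLocal, if_pos, if_neg, add_sub_cancel]
  have exit : yMap p q f (m * period p q + p + 2 * q - 4) = -(m + 1) := by
    simp (disch := omega) only [yMap_of_nonneg hm, yLocal, if_pos, if_neg]
  have back : yMap p q f (-(m + 1)) = m * period p q := by
    rw [yMap_of_neg (by omega)]; ring_nf
  have hstart : IsPeriodicPt (yMap p q f) (1 + ((q - 3) + 1) + 1) (m * period p q) := by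
    rw [IsPeriodicPt, IsFixedPt, iterate_add_apply, iterate_add_apply, iterate_one, enter,
      iterate_succ_eq_of_run fun w h₁ h₂ => run w h₁ (by omega),
      show m * period p q + p + q - 1 + (q - 3 : ℕ) = m * period p q + p + 2 * q - 4 by omega,
      exit, back]
  rw [show 1 + ((q - 3) + 1) + 1 = q by omega] at hstart
  have hrun : IsPeriodicPt (yMap p q f) q (m * period p q + p + q - 1) := enter ▸ hstart.apply
  rcases hv with rfl | rfl | hv
  · exact hstart
  · exact exit ▸ (hrun.of_run run (by omega) le_rfl).apply
  · exact hrun.of_run run hv.1 hv.2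

lemma isPeriodicPt_xMap (u : ℤ) : IsPeriodicPt (xMap p q f) p u := by
  have hP : period p q = 2 * p + 2 * q - 5 := rfl
  rcases lt_or_ge u 0 with hu | hu
  · exact isPeriodicPt_xMap_chain hp hq (m := -u - 1) (by omega) (.inl (by ring))
  obtain ⟨m, hm, h₁, h₂⟩ := exists_block hp hq hu
  have ha := pendantPos_bounds f m
  by_cases hfix : xMap p q f u = u
  · exact IsFixedPt.isPeriodicPt hfix p
  obtain h | h | h : u = m * period p q ∨
      (m * period p q + 1 ≤ u ∧ u ≤ m * period p q + pendantPos f m ∨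
        m * period p q + pendantPos f m + q ≤ u ∧ u ≤ m * period p q + q + p - 1) ∨
      m * period p q + p + 2 * q - 3 ≤ u := by
    by_contra! h
    exact hfix (by
      simp (disch := omega) only [xMap_of_nonneg hm, xLocal, if_pos, if_neg, add_sub_cancel,
        ite_self])
  · rcases eq_or_lt_of_le hm with rfl | hm'
    · rw [zero_mul] at h
      exact absurd (h ▸ xMap_zero) hfix
    have e : (m - 1) * period p q = m * period p q - period p q := by ring
    exact isPeriodicPt_xMap_chain hp hq (m := m - 1) (by omega) (.inr ⟨by omega, by omega⟩)
  · exact isPeriodicPt_xMap_pendant hp hq hm h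
  · exact isPeriodicPt_xMap_chain hp hq hm (.inr ⟨h, by omega⟩)

lemma isPeriodicPt_yMap (u : ℤ) : IsPeriodicPt (yMap p q f) q u := by
  have hP : period p q = 2 * p + 2 * q - 5 := rfl
  rcases lt_or_ge u 0 with hu | hu
  · exact isPeriodicPt_yMap_chain hp hq (m := -u - 1) (by omega) (.inr (.inl (by ring)))
  obtain ⟨m, hm, h₁, h₂⟩ := exists_block hp hq hu
  have ha := pendantPos_bounds f m
  by_cases hfix : yMap p q f u = u
  · exact IsFixedPt.isPeriodicPt hfix q
  obtain h | h | h : u = m * period p q ∨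
      (m * period p q + pendantPos f m ≤ u ∧ u ≤ m * period p q + pendantPos f m + q - 1) ∨
      (m * period p q + p + q - 1 ≤ u ∧ u ≤ m * period p q + p + 2 * q - 4) := by
    by_contra! h
    exact hfix (by
      simp (disch := omega) only [yMap_of_nonneg hm, yLocal, if_neg, add_sub_cancel, ite_self])
  · exact isPeriodicPt_yMap_chain hp hq hm (.inl h)
  · exact isPeriodicPt_yMap_pendant hp hq hm h
  · exact isPeriodicPt_yMap_chain hp hq hm (.inr (.inr h))

lemma xMap_mul_period {e : ℤ} (he : 0 ≤ e) : xMap p q f (e * period p q) = -e := by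
  have hP : period p q = 2 * p + 2 * q - 5 := rfl
  simp (disch := omega) only [xMap_of_nonneg he, xLocal, sub_self, ite_true]

lemma xMap_of_dvd_add_one {u : ℤ} (hu : 0 ≤ u) (hdvd : period p q ∣ u + 1) :
    xMap p q f u = u + 1 := by
  have hP : period p q = 2 * p + 2 * q - 5 := rfl
  obtain ⟨m, hm, h₁, h₂⟩ := exists_block hp hq hu
  have ha := pendantPos_bounds f m
  have hr : period p q ≤ u - m * period p q + 1 := by
    refine Int.le_of_dvd (by omega) ?_
    rw [sub_add_eq_add_sub]
    exact dvd_sub hdvd (dvd_mul_left (period p q) m)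
  simp (disch := omega) only [xMap_of_nonneg hm, xLocal, if_neg, add_sub_cancel]

lemma exists_dvd_not_dvd_xMap {d : ℤ} (hd : 2 ≤ d) : ∃ u, d ∣ u ∧ ¬ d ∣ xMap p q f u := by
  have hP : period p q = 2 * p + 2 * q - 5 := rfl
  by_cases hcop : IsCoprime d (period p q)
  · -- `u ≡ 0 [ZMOD d]` and `u ≡ -1 [ZMOD period p q]`, so that `xMap u = u + 1`
    obtain ⟨s, t, hst⟩ := hcop
    have hw : 0 ≤ -s % period p q := Int.emod_nonneg _ (by omega)
    refine ⟨d * (-s % period p q), dvd_mul_right _ _, ?_⟩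
    rw [xMap_of_dvd_add_one hp hq (by positivity)
      ⟨t - d * (-s / period p q), by rw [Int.emod_def]; linear_combination -hst⟩,
      Int.dvd_add_right (dvd_mul_right _ _)]
    intro h
    have := Int.le_of_dvd one_pos h
    omega
  · -- `e := d / gcd d (period p q)` is a proper divisor of `d` with `d ∣ e * period p q`, and
    -- `xMap (e * period p q) = -e`
    have hg : 2 ≤ (d.gcd (period p q) : ℤ) := by
      have h1 : d.gcd (period p q) ≠ 1 := mt Int.isCoprime_iff_gcd_eq_one.mpr hcop
      have h0 : d.gcd (period p q) ≠ 0 := by simp [Int.gcd_eq_zero_iff]; omega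
      omega
    obtain ⟨e, he⟩ := Int.gcd_dvd_left d (period p q)
    have he0 : 0 < e := by nlinarith
    refine ⟨e * period p q, ?_, ?_⟩
    · rw [he, mul_comm e]
      exact mul_dvd_mul_right (Int.gcd_dvd_right _ _) e
    · rw [xMap_mul_period hp hq he0.le, dvd_neg]
      intro h
      have := Int.le_of_dvd he0 h
      nlinarith

lemma xMap_injective : Injective (xMap p q) := by
  have hP : period p q = 2 * p + 2 * q - 5 := rfl
  intro f f' h
  funext n
  have key : ∀ g : ℕ → Bool,
      xMap p q g (n * period p q + 1) = n * period p q + 1 + if g n then 1 else (q : ℤ) := by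
    intro g
    simp (disch := omega) only [xMap_of_nonneg (m := n) (by positivity), xLocal, if_neg,
      add_sub_cancel_left]
    cases hg : g n <;> simp [pendantPos, hg]
  have := congrFun h (n * period p q + 1)
  rw [key, key, add_right_inj] at this
  revert this
  cases f n <;> cases f' n <;> simp <;> omega

def xPerm (f : ℕ → Bool) : Equiv.Perm ℤ :=
  permOfIsPeriodicPt (xMap p q f) (by omega) (isPeriodicPt_xMap hp hq)

def yPerm (f : ℕ → Bool) : Equiv.Perm ℤ :=
  permOfIsPeriodicPt (yMap p q f) (by omega) (isPeriodicPt_yMap hp hq)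

def action (f : ℕ → Bool) : Tri p q →* Equiv.Perm ℤ :=
  PresentedGroup.toGroup (f := ![xPerm hp hq f, yPerm hp hq f]) <| by
    rintro _ (rfl | rfl) <;> simp [permOfIsPeriodicPt_pow, xPerm, yPerm]

lemma action_triX (f : ℕ → Bool) : action hp hq f (triX p q) = xPerm hp hq f :=
  PresentedGroup.toGroup.of _

lemma action_triZ (f : ℕ → Bool) : action hp hq f (triZ p q) = Equiv.addRight (-1) := by
  have hxy : xPerm hp hq f * yPerm hp hq f = Equiv.addRight 1 :=
    Equiv.ext (xMap_yMap hp hq)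
  have hy : action hp hq f (triY p q) = yPerm hp hq f := PresentedGroup.toGroup.of _
  rw [triZ, map_inv, map_mul, action_triX, hy, hxy, Equiv.neg_addRight]

abbrev stabilizer (f : ℕ → Bool) : Subgroup (Tri p q) := stabilizerZero (action hp hq f)

lemma nonparabolic_stabilizer (f : ℕ → Bool) : Nonparabolic (stabilizer hp hq f) :=
  fun _ hg ⟨_, _, hk, hgk⟩ => hk (eq_zero_of_conj_zpow_mem_stabilizerZero
    (action_triZ hp hq f) (hgk ▸ hg))

lemma isCoatom_stabilizer (f : ℕ → Bool) : IsCoatom (stabilizer hp hq f) := by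
  refine isCoatom_stabilizerZero (action_triZ hp hq f) fun d hd => ⟨triX p q, ?_, ?_⟩
  · rw [mem_stabilizerZero, action_triX]
    exact xMap_zero (f := f)
  · rw [action_triX]
    exact exists_dvd_not_dvd_xMap hp hq hd

lemma stabilizer_injective : Injective (stabilizer hp hq) := by
  intro f f' h
  have := congrArg (· (triX p q))
    (eq_of_stabilizerZero_eq (action_triZ hp hq f) (action_triZ hp hq f') h)
  simp only [action_triX] at this
  exact xMap_injective hp hq (congrArg DFunLike.coe this)

end TriangleAction

/-- For all integers p ≥ 3, q ≥ 3, the triangle group Δ(p,q,∞) has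
uncountably many conjugacy classes of nonparabolic maximal subgroups. -/
theorem uncountably_many_nonparabolic_maximal_q_ge_three (p q : ℕ) (hp : 3 ≤ p) (hq : 3 ≤ q) :
    Uncountable (Quot (conjRel (fun M : Subgroup (Tri p q) =>
      Nonparabolic M ∧ IsCoatom M))) :=
  uncountable_quot_conjRel (TriangleAction.stabilizer_injective hp hq) fun f =>
    ⟨TriangleAction.nonparabolic_stabilizer hp hq f, TriangleAction.isCoatom_stabilizer hp hq f⟩
end

section
/- For every integer n ≥ 2, the free group of rank n has uncountably many conjugacy classes of maximal subgroups of infinite index. -/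
/-!
For `S ⊆ ℕ` let the free group on `ι` act on `ℤ`, a generator `i` by the shift `x ↦ x + 1`,
a generator `j` by the involution swapping `0 ↔ 1` and `4k + 4 ↔ 4k + 5` for `k ∈ S`, and the
other generators trivially. The stabilizer of `0` is transitive on `ℤ ∖ {0}` (the conjugates
`i^m j i^(-m)` move points one step at a time), hence maximal; it has infinite index since the
orbit of `0` is `ℤ`; and it determines `S`, as `i^(-(4k+4)) j i^(4k+4)` fixes `0` iff `k ∉ S`.
This gives uncountably many such subgroups, while each conjugacy class is countable because the
free group is.
-/

open Equiv MulAction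
open scoped Pointwise

section Conjugacy

variable {G : Type*} [Group G] {P : Subgroup G → Prop}

theorem conjRel_iff_smul {M N : {M : Subgroup G // P M}} :
    conjRel P M N ↔ ∃ g : G, (N : Subgroup G) = MulAut.conj g • (M : Subgroup G) :=
  Iff.rfl

theorem conjRel_equivalence : Equivalence (conjRel P) where
  refl M := conjRel_iff_smul.2 ⟨1, by rw [map_one, one_smul]⟩
  symm {M N} h := by
    obtain ⟨g, hg⟩ := conjRel_iff_smul.1 h
    exact conjRel_iff_smul.2 ⟨g⁻¹, by rw [hg, smul_smul, ← map_mul, inv_mul_cancel, map_one,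
      one_smul]⟩
  trans {M N L} h h' := by
    obtain ⟨g, hg⟩ := conjRel_iff_smul.1 h
    obtain ⟨g', hg'⟩ := conjRel_iff_smul.1 h'
    exact conjRel_iff_smul.2 ⟨g' * g, by rw [hg', hg, map_mul, mul_smul]⟩

theorem uncountable_quot_conjRel_s13 [Countable G] [Uncountable {M : Subgroup G // P M}] :
    Uncountable (Quot (conjRel P)) := by
  by_contra hcount
  rw [not_uncountable_iff] at hcount
  have hconj (M : {M : Subgroup G // P M}) :
      ∃ g : G, (M : Subgroup G) = MulAut.conj g • ((Quot.mk _ M).out : Subgroup G) :=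
    conjRel_iff_smul.1 <| conjRel_equivalence.eqvGen_iff.1 <| Quot.eqvGen_exact (Quot.out_eq _)
  choose g hg using hconj
  have hinj : Function.Injective fun M => (g M, Quot.mk (conjRel P) M) := by
    intro M N hMN
    simp only [Prod.mk.injEq] at hMN
    exact Subtype.ext (by rw [hg M, hg N, hMN.1, hMN.2])
  exact not_countable hinj.countable

end Conjugacy

section StabilizerOrbit

variable {G α : Type*} [Group G] (φ : G →* Perm α)

def StabilizerOrbitRel (a x y : α) : Prop := ∃ g, φ g a = a ∧ φ g x = y

namespace StabilizerOrbitRel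

variable {φ} {a x y z : α}

theorem refl : StabilizerOrbitRel φ a x x := ⟨1, by simp, by simp⟩

theorem symm (h : StabilizerOrbitRel φ a x y) : StabilizerOrbitRel φ a y x := by
  obtain ⟨g, hga, hgx⟩ := h
  exact ⟨g⁻¹, by rw [map_inv, Perm.inv_eq_iff_eq, hga],
    by rw [map_inv, Perm.inv_eq_iff_eq, hgx]⟩

theorem trans (h : StabilizerOrbitRel φ a x y) (h' : StabilizerOrbitRel φ a y z) :
    StabilizerOrbitRel φ a x z := by
  obtain ⟨g, hga, hgx⟩ := h
  obtain ⟨g', hga', hgy⟩ := h'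
  exact ⟨g' * g, by simp [hga, hga'], by simp [hgx, hgy]⟩

theorem of_conj (u : G) (h : StabilizerOrbitRel φ (φ u a) (φ u x) (φ u y)) :
    StabilizerOrbitRel φ a x y := by
  obtain ⟨g, hga, hgx⟩ := h
  refine ⟨u⁻¹ * g * u, ?_, ?_⟩ <;> simp [hga, hgx]

end StabilizerOrbitRel

theorem isCoatom_comap_stabilizer {a : α} (hmove : ∃ g, φ g a ≠ a)
    (hrel : ∀ x ≠ a, ∀ y ≠ a, StabilizerOrbitRel φ a x y) :
    IsCoatom ((stabilizer (Perm α) a).comap φ) := by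
  have hmem (g : G) : g ∈ (stabilizer (Perm α) a).comap φ ↔ φ g a = a := Iff.rfl
  refine ⟨fun htop => ?_, fun H hlt => ?_⟩
  · obtain ⟨g, hg⟩ := hmove
    exact hg ((hmem g).1 (htop ▸ Subgroup.mem_top g))
  obtain ⟨h, hhH, hh⟩ := SetLike.exists_of_lt hlt
  refine eq_top_iff.2 fun g _ => ?_
  by_cases hg : φ g a = a
  · exact hlt.le ((hmem g).2 hg)
  obtain ⟨m, hma, hmh⟩ := hrel (φ h a) hh (φ g a) hg
  have hrest : g⁻¹ * m * h ∈ H := hlt.le <| (hmem _).2 <| by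
    simp [hmh]
  have hmH : m ∈ H := hlt.le ((hmem m).2 hma)
  simpa using H.mul_mem (H.mul_mem hmH hhH) (H.inv_mem hrest)

end StabilizerOrbit

def pairSwap (x : ℤ) : ℤ := if x % 2 = 0 then x + 1 else x - 1

/-- Indices `j` of the blocks `{2j, 2j + 1}` swapped by `blockSwap S`. -/
def swappedBlocks (S : Set ℕ) : Set ℤ := {j | j = 0 ∨ ∃ k ∈ S, j = 2 * k + 2}

open scoped Classical in
noncomputable def blockSwap (S : Set ℕ) : Perm ℤ :=
  Function.Involutive.toPerm (fun x => if x / 2 ∈ swappedBlocks S then pairSwap x else x) <| by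
    intro x
    by_cases hx : x / 2 ∈ swappedBlocks S
    · have hdiv : pairSwap x / 2 = x / 2 := by unfold pairSwap; split_ifs <;> omega
      simp only [hx, if_true, hdiv]
      unfold pairSwap; split_ifs <;> omega
    · simp [hx]

section BlockSwap

variable {S : Set ℕ}

open scoped Classical in
theorem blockSwap_apply (x : ℤ) :
    blockSwap S x = if x / 2 ∈ swappedBlocks S then pairSwap x else x := rfl

theorem blockSwap_apply_eq_self_iff {x : ℤ} :
    blockSwap S x = x ↔ x / 2 ∉ swappedBlocks S := by
  rw [blockSwap_apply]
  split_ifs with hx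
  · simp only [hx, not_true_eq_false, iff_false]; unfold pairSwap; split_ifs <;> omega
  · simp [hx]

theorem blockSwap_apply_zero : blockSwap S 0 = 1 := by
  simp [blockSwap, swappedBlocks, pairSwap]

theorem blockSwap_apply_one : blockSwap S 1 = 0 := by
  simp [blockSwap, swappedBlocks, pairSwap]

theorem blockSwap_apply_of_odd_block {x : ℤ} (hodd : x / 2 % 2 = 1) :
    blockSwap S x = x := by
  refine blockSwap_apply_eq_self_iff.2 fun hmem => ?_
  obtain h | ⟨k, -, hk⟩ := hmem <;> omega

theorem blockSwap_apply_of_neg {x : ℤ} (hx : x < 0) : blockSwap S x = x := by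
  refine blockSwap_apply_eq_self_iff.2 fun hmem => ?_
  obtain h | ⟨k, -, hk⟩ := hmem <;> omega

theorem blockSwap_apply_two : blockSwap S 2 = 2 := blockSwap_apply_of_odd_block (by norm_num)

-- all swapped blocks have even index
theorem blockSwap_apply_eq_self_or (x : ℤ) :
    blockSwap S x = x ∨ blockSwap S (x + 2) = x + 2 := by
  rcases Int.emod_two_eq_zero_or_one (x / 2) with h | h
  · exact Or.inr (blockSwap_apply_of_odd_block (by omega))
  · exact Or.inl (blockSwap_apply_of_odd_block h)

theorem blockSwap_apply_block_eq_self_iff (k : ℕ) :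
    blockSwap S (4 * k + 4) = 4 * k + 4 ↔ k ∉ S := by
  rw [blockSwap_apply_eq_self_iff, show (4 * (k : ℤ) + 4) / 2 = 2 * k + 2 by omega]
  simp [swappedBlocks]
  omega

end BlockSwap

section ShiftSwap

variable {ι : Type*} (i j : ι) (S : Set ℕ)

open scoped Classical in
noncomputable def shiftSwapHom : FreeGroup ι →* Perm ℤ :=
  FreeGroup.lift fun k => if k = i then Equiv.addRight 1 else if k = j then blockSwap S else 1

noncomputable def zeroStabilizer : Subgroup (FreeGroup ι) :=
  (stabilizer (Perm ℤ) (0 : ℤ)).comap (shiftSwapHom i j S)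

def shiftedSwap (m : ℤ) : FreeGroup ι :=
  FreeGroup.of i ^ m * FreeGroup.of j * (FreeGroup.of i ^ m)⁻¹

variable {i j}

theorem mem_zeroStabilizer {g : FreeGroup ι} :
    g ∈ zeroStabilizer i j S ↔ shiftSwapHom i j S g 0 = 0 := Iff.rfl

theorem shiftSwapHom_of_left : shiftSwapHom i j S (FreeGroup.of i) = Equiv.addRight 1 := by
  simp [shiftSwapHom]

theorem shiftSwapHom_of_right (hij : i ≠ j) :
    shiftSwapHom i j S (FreeGroup.of j) = blockSwap S := by
  simp [shiftSwapHom, hij.symm]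

theorem shiftSwapHom_shiftedSwap_apply (hij : i ≠ j) (m x : ℤ) :
    shiftSwapHom i j S (shiftedSwap i j m) x = blockSwap S (x - m) + m := by
  simp [shiftedSwap, shiftSwapHom_of_left, shiftSwapHom_of_right S hij, sub_eq_add_neg]

theorem stabilizerOrbitRel_of_shiftedSwap (hij : i ≠ j) {c m : ℤ}
    (hc : blockSwap S (c - m) = c - m) : StabilizerOrbitRel (shiftSwapHom i j S) c m (m + 1) :=
  ⟨shiftedSwap i j m, by simp [shiftSwapHom_shiftedSwap_apply S hij, hc],
    by simp [shiftSwapHom_shiftedSwap_apply S hij, blockSwap_apply_zero, add_comm]⟩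

theorem stabilizerOrbitRel_succ (hij : i ≠ j) {x : ℤ} (hx : x ≠ -1) (hx' : x ≠ 0) :
    StabilizerOrbitRel (shiftSwapHom i j S) 0 x (x + 1) := by
  obtain hpos | hneg : 0 < x ∨ x < 0 := by omega
  · exact stabilizerOrbitRel_of_shiftedSwap S hij (blockSwap_apply_of_neg (by omega))
  rcases blockSwap_apply_eq_self_or (S := S) (-x) with hfix | hfix
  · exact stabilizerOrbitRel_of_shiftedSwap S hij (by simpa using hfix)
  -- otherwise move `0` to `2`, which `shiftedSwap x` fixes, leaving `x` and `x + 1` in place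
  set u := shiftedSwap i j 1 * shiftedSwap i j 0
  have hu (y : ℤ) : shiftSwapHom i j S u y = blockSwap S (blockSwap S y - 1) + 1 := by
    simp [u, shiftSwapHom_shiftedSwap_apply S hij]
  refine StabilizerOrbitRel.of_conj u ?_
  rw [hu, hu, hu, blockSwap_apply_zero, sub_self, blockSwap_apply_zero,
    blockSwap_apply_of_neg (by omega : x < 0), blockSwap_apply_of_neg (by omega : x - 1 < 0),
    blockSwap_apply_of_neg (by omega : x + 1 < 0),
    blockSwap_apply_of_neg (by omega : x + 1 - 1 < 0), sub_add_cancel, sub_add_cancel,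
    one_add_one_eq_two]
  exact stabilizerOrbitRel_of_shiftedSwap S hij (by rwa [sub_eq_neg_add])

theorem stabilizerOrbitRel_neg_one_one (hij : i ≠ j) :
    StabilizerOrbitRel (shiftSwapHom i j S) 0 (-1) 1 := by
  refine StabilizerOrbitRel.of_conj (FreeGroup.of j) ?_
  rw [shiftSwapHom_of_right S hij, blockSwap_apply_zero, blockSwap_apply_one,
    blockSwap_apply_of_neg (by norm_num)]
  exact stabilizerOrbitRel_of_shiftedSwap S hij (by simpa using blockSwap_apply_two)

theorem stabilizerOrbitRel_one (hij : i ≠ j) {x : ℤ} (hx : x ≠ 0) :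
    StabilizerOrbitRel (shiftSwapHom i j S) 0 x 1 := by
  rcases lt_or_gt_of_ne hx with hneg | hpos
  · obtain hle : x ≤ -1 := by omega
    clear hx hneg
    induction x, hle using Int.leInductionDown with
    | base => exact stabilizerOrbitRel_neg_one_one S hij
    | pred y hy ih =>
      refine StabilizerOrbitRel.trans ?_ ih
      simpa using stabilizerOrbitRel_succ S hij (x := y - 1) (by omega) (by omega)
  · obtain hle : 1 ≤ x := by omega
    clear hx hpos
    induction x, hle using Int.leInduction with
    | base => exact .refl
    | succ y hy ih => exact (stabilizerOrbitRel_succ S hij (by omega) (by omega)).symm.trans ih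

theorem isCoatom_zeroStabilizer (hij : i ≠ j) : IsCoatom (zeroStabilizer i j S) :=
  isCoatom_comap_stabilizer _ ⟨FreeGroup.of i, by simp [shiftSwapHom_of_left]⟩
    fun x hx y hy => (stabilizerOrbitRel_one S hij hx).trans (stabilizerOrbitRel_one S hij hy).symm

theorem infinite_quotient_zeroStabilizer : Infinite (FreeGroup ι ⧸ zeroStabilizer i j S) := by
  refine Infinite.of_injective (fun m : ℤ => (FreeGroup.of i ^ m : FreeGroup ι ⧸ _))
    fun m m' h => ?_
  simp only [QuotientGroup.eq, mem_zeroStabilizer, ← zpow_neg, ← zpow_add, map_zpow,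
    shiftSwapHom_of_left] at h
  simpa [neg_add_eq_zero, eq_comm] using h

theorem shiftedSwap_mem_zeroStabilizer_iff (hij : i ≠ j) (k : ℕ) :
    shiftedSwap i j (-(4 * k + 4)) ∈ zeroStabilizer i j S ↔ k ∉ S := by
  rw [mem_zeroStabilizer, shiftSwapHom_shiftedSwap_apply S hij, zero_sub, neg_neg,
    ← blockSwap_apply_block_eq_self_iff, add_neg_eq_zero]

theorem zeroStabilizer_injective (hij : i ≠ j) :
    Function.Injective fun S : Set ℕ => zeroStabilizer i j S := by
  intro S S' h
  ext k
  simp only at h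
  rw [← not_iff_not, ← shiftedSwap_mem_zeroStabilizer_iff S hij,
    ← shiftedSwap_mem_zeroStabilizer_iff S' hij, h]

end ShiftSwap

/-- For every integer n ≥ 2, the free group of rank n has uncountably many
conjugacy classes of maximal subgroups of infinite index. -/
theorem freeGroup_uncountably_many_maximal_infinite_index (n : ℕ) (hn : 2 ≤ n) :
    Uncountable (Quot (conjRel (fun M : Subgroup (FreeGroup (Fin n)) =>
      IsCoatom M ∧ Infinite (FreeGroup (Fin n) ⧸ M)))) := by
  have hij : (⟨0, by omega⟩ : Fin n) ≠ ⟨1, by omega⟩ := by simp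
  have : Uncountable (Set ℕ) :=
    Cardinal.aleph0_lt_mk_iff.mp (by simpa using Cardinal.cantor Cardinal.aleph0)
  have : Uncountable {M : Subgroup (FreeGroup (Fin n)) //
      IsCoatom M ∧ Infinite (FreeGroup (Fin n) ⧸ M)} :=
    Function.Injective.uncountable (f := fun S : Set ℕ => ⟨zeroStabilizer _ _ S,
        isCoatom_zeroStabilizer S hij, infinite_quotient_zeroStabilizer S⟩)
      fun S S' h => zeroStabilizer_injective hij (congrArg Subtype.val h)
  exact uncountable_quot_conjRel_s13
end
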